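/- If w₀ ∈ W_G satisfies ⟨w₀·δ_G, δ_K⟩ = max over w ∈ W_G of ⟨w·δ_G, δ_K⟩, then w₀(Φ_G⁺) ⊇ Φ_K⁺. -/

import Mathlib

/-!
Suppose some `β ∈ Φ_K⁺` is not in `w₀(Φ_G⁺)`, so that `w₀⁻¹ β` is a negative root. For any positive
system `P` and `γ ∈ P`, pairing each `α ∈ P` with whichever of `± s_γ α` is positive shows
`⟪∑ P, γ⟫ > 0`. Hence `⟪w₀ δ_G, β⟫ = ⟪δ_G, w₀⁻¹ β⟫ < 0 < ⟪δ_K, β⟫`, and then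
`⟪s_β w₀ δ_G, δ_K⟫ = ⟪w₀ δ_G, δ_K⟫ - 2 ⟪β, w₀ δ_G⟫ ⟪β, δ_K⟫ / ‖β‖²` exceeds the maximum.
-/

open scoped RealInnerProductSpace

/-- The reflection in the hyperplane orthogonal to `α`. -/
noncomputable def rootReflection {V : Type*} [NormedAddCommGroup V] [InnerProductSpace ℝ V]
    [FiniteDimensional ℝ V] (α : V) : V ≃ₗᵢ[ℝ] V :=
  Submodule.reflection ((ℝ ∙ α)ᗮ)

/-- The Weyl group: the group generated by the reflections in the roots. -/
noncomputable def weylGroup {V : Type*} [NormedAddCommGroup V] [InnerProductSpace ℝ V]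
    [FiniteDimensional ℝ V] (Φ : Finset V) : Subgroup (V ≃ₗᵢ[ℝ] V) :=
  Subgroup.closure { w | ∃ α ∈ Φ, w = rootReflection α }

section Module

variable {V : Type*} [AddCommGroup V] [Module ℝ V] {S P : Finset V} {f : V →ₗ[ℝ] ℝ}

structure IsPositiveSystem (S P : Finset V) (f : V →ₗ[ℝ] ℝ) : Prop where
  ne_zero : ∀ α ∈ S, f α ≠ 0
  mem_iff : ∀ α, α ∈ P ↔ α ∈ S ∧ 0 < f α

namespace IsPositiveSystem

lemma mem (h : IsPositiveSystem S P f) {α : V} (hα : α ∈ P) : α ∈ S :=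
  ((h.mem_iff α).1 hα).1

lemma pos (h : IsPositiveSystem S P f) {α : V} (hα : α ∈ P) : 0 < f α :=
  ((h.mem_iff α).1 hα).2

lemma ne_zero_of_mem (h : IsPositiveSystem S P f) {α : V} (hα : α ∈ P) : α ≠ 0 := by
  rintro rfl
  simpa using h.pos hα

lemma neg_notMem (h : IsPositiveSystem S P f) {α : V} (hα : α ∈ P) : -α ∉ P := fun hα' => by
  have := h.pos hα'
  rw [map_neg] at this
  linarith [h.pos hα]

lemma of_subset (h : IsPositiveSystem S P f) {T Q : Finset V} (hT : T ⊆ S)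
    (hQ : ∀ α, α ∈ Q ↔ α ∈ T ∧ α ∈ P) : IsPositiveSystem T Q f where
  ne_zero α hα := h.ne_zero α (hT hα)
  mem_iff α := by
    rw [hQ, h.mem_iff]
    exact ⟨fun ⟨hαT, _, hα⟩ => ⟨hαT, hα⟩, fun ⟨hαT, hα⟩ => ⟨hαT, hT hαT, hα⟩⟩

end IsPositiveSystem

end Module

section InnerProductSpace

variable {V : Type*} [NormedAddCommGroup V] [InnerProductSpace ℝ V] [FiniteDimensional ℝ V]
  {S P : Finset V} {f : V →ₗ[ℝ] ℝ}

lemma rootReflection_apply (α v : V) :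
    rootReflection α v = v - (2 * ⟪α, v⟫ / ‖α‖ ^ 2) • α := by
  rw [rootReflection, Submodule.reflection_apply, Submodule.starProjection_orthogonal_val,
    Submodule.starProjection_singleton, two_smul]
  simp only [RCLike.ofReal_real_eq_id, id_eq]
  rw [div_eq_mul_inv, div_eq_mul_inv]
  module

lemma rootReflection_self (α : V) : rootReflection α α = -α :=
  Submodule.reflection_orthogonalComplement_singleton_eq_neg α

lemma rootReflection_rootReflection (α v : V) : rootReflection α (rootReflection α v) = v :=
  Submodule.reflection_reflection _ v

lemma rootReflection_inv (α : V) : (rootReflection α)⁻¹ = rootReflection α :=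
  Submodule.reflection_inv

lemma inner_rootReflection_self_right (α v : V) : ⟪rootReflection α v, α⟫ = -⟪v, α⟫ := by
  rw [← (rootReflection α).inner_map_map, rootReflection_rootReflection, rootReflection_self,
    inner_neg_right]

lemma inner_rootReflection_left (α x y : V) :
    ⟪rootReflection α x, y⟫ = ⟪x, y⟫ - 2 * ⟪α, x⟫ * ⟪α, y⟫ / ‖α‖ ^ 2 := by
  rw [rootReflection_apply, inner_sub_left, real_inner_smul_left]
  ring

lemma mapsTo_of_mem_weylGroup {Φ : Finset V}
    (hΦ : ∀ α ∈ Φ, ∀ β ∈ Φ, rootReflection α β ∈ Φ) {w : V ≃ₗᵢ[ℝ] V} (hw : w ∈ weylGroup Φ) :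
    Set.MapsTo w Φ Φ := by
  induction hw using Subgroup.closure_induction'' with
  | mem x hx =>
    obtain ⟨α, hα, rfl⟩ := hx
    exact hΦ α hα
  | inv_mem x hx =>
    obtain ⟨α, hα, rfl⟩ := hx
    rw [rootReflection_inv]
    exact hΦ α hα
  | one => exact Set.mapsTo_id _
  | mul x y _ _ hx hy => exact hx.comp hy

open Classical in
noncomputable def positiveRootReflection (P : Finset V) (γ α : V) : V :=
  if rootReflection γ α ∈ P then rootReflection γ α else -rootReflection γ α

namespace IsPositiveSystem

lemma neg_mem (h : IsPositiveSystem S P f) (hS : ∀ α ∈ S, ∀ β ∈ S, rootReflection α β ∈ S)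
    {α : V} (hα : α ∈ S) (hαP : α ∉ P) : -α ∈ P := by
  have hfα : f α < 0 :=
    (h.ne_zero α hα).lt_or_gt.resolve_right fun hpos => hαP ((h.mem_iff α).2 ⟨hα, hpos⟩)
  refine (h.mem_iff _).2 ⟨?_, by rw [map_neg]; linarith⟩
  simpa only [rootReflection_self] using hS α hα α hα

lemma inner_pos_of_rootReflection_notMem (h : IsPositiveSystem S P f)
    (hS : ∀ α ∈ S, ∀ β ∈ S, rootReflection α β ∈ S) {γ α : V} (hγ : γ ∈ P) (hα : α ∈ P)
    (hγα : rootReflection γ α ∉ P) : 0 < ⟪γ, α⟫ := by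
  have hle : f (rootReflection γ α) ≤ 0 := not_lt.1 fun hpos =>
    hγα ((h.mem_iff _).2 ⟨hS γ (h.mem hγ) α (h.mem hα), hpos⟩)
  rw [rootReflection_apply, map_sub, map_smul, smul_eq_mul] at hle
  have hcoef : 0 < 2 * ⟪γ, α⟫ / ‖γ‖ ^ 2 :=
    pos_of_mul_pos_left (by linarith [h.pos hα]) (h.pos hγ).le
  have hnorm : 0 < ‖γ‖ ^ 2 := by have := h.ne_zero_of_mem hγ; positivity
  linarith [(div_pos_iff_of_pos_right hnorm).1 hcoef]

lemma positiveRootReflection_mem (h : IsPositiveSystem S P f)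
    (hS : ∀ α ∈ S, ∀ β ∈ S, rootReflection α β ∈ S) {γ α : V} (hγ : γ ∈ P) (hα : α ∈ P) :
    positiveRootReflection P γ α ∈ P := by
  unfold positiveRootReflection
  split_ifs with hγα
  · exact hγα
  · exact h.neg_mem hS (hS γ (h.mem hγ) α (h.mem hα)) hγα

lemma positiveRootReflection_positiveRootReflection (h : IsPositiveSystem S P f) {γ α : V}
    (hα : α ∈ P) : positiveRootReflection P γ (positiveRootReflection P γ α) = α := by
  unfold positiveRootReflection
  by_cases hγα : rootReflection γ α ∈ P
  · rw [if_pos hγα, rootReflection_rootReflection, if_pos hα]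
  · rw [if_neg hγα, map_neg, rootReflection_rootReflection, if_neg (h.neg_notMem hα), neg_neg]

lemma positiveRootReflection_self (h : IsPositiveSystem S P f) {γ : V} (hγ : γ ∈ P) :
    positiveRootReflection P γ γ = γ := by
  rw [positiveRootReflection, rootReflection_self, if_neg (h.neg_notMem hγ), neg_neg]

lemma inner_add_inner_positiveRootReflection_nonneg (h : IsPositiveSystem S P f)
    (hS : ∀ α ∈ S, ∀ β ∈ S, rootReflection α β ∈ S) {γ α : V} (hγ : γ ∈ P) (hα : α ∈ P) :
    0 ≤ ⟪α, γ⟫ + ⟪positiveRootReflection P γ α, γ⟫ := by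
  unfold positiveRootReflection
  split_ifs with hγα
  · rw [inner_rootReflection_self_right, add_neg_cancel]
  · rw [inner_neg_left, inner_rootReflection_self_right, neg_neg, real_inner_comm]
    linarith [h.inner_pos_of_rootReflection_notMem hS hγ hα hγα]

/-- `positiveRootReflection P γ` is an involution of `P`; the pairs it forms contribute `0` or
`2 ⟪α, γ⟫ ≥ 0` to twice the sum, and its fixed point `γ` contributes `2 ‖γ‖² > 0`. -/
theorem inner_sum_pos (h : IsPositiveSystem S P f)
    (hS : ∀ α ∈ S, ∀ β ∈ S, rootReflection α β ∈ S) {γ : V} (hγ : γ ∈ P) :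
    0 < ⟪∑ α ∈ P, α, γ⟫ := by
  have hperm : ∑ α ∈ P, ⟪positiveRootReflection P γ α, γ⟫ = ∑ α ∈ P, ⟪α, γ⟫ :=
    Finset.sum_nbij' _ _ (fun _ => h.positiveRootReflection_mem hS hγ)
      (fun _ => h.positiveRootReflection_mem hS hγ)
      (fun _ => h.positiveRootReflection_positiveRootReflection)
      (fun _ => h.positiveRootReflection_positiveRootReflection) fun _ _ => rfl
  have hpairs : 0 < ∑ α ∈ P, (⟪α, γ⟫ + ⟪positiveRootReflection P γ α, γ⟫) := by
    refine Finset.sum_pos' (fun _ => h.inner_add_inner_positiveRootReflection_nonneg hS hγ)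
      ⟨γ, hγ, ?_⟩
    rw [h.positiveRootReflection_self hγ, real_inner_self_eq_norm_sq]
    have := h.ne_zero_of_mem hγ
    positivity
  rw [Finset.sum_add_distrib, hperm] at hpairs
  rw [sum_inner]
  linarith

end IsPositiveSystem

end InnerProductSpace

theorem stmt1_general {V : Type*} [NormedAddCommGroup V] [InnerProductSpace ℝ V] [FiniteDimensional ℝ V]
    (Φ : Finset V)
    (hrefl : ∀ α ∈ Φ, ∀ β ∈ Φ, rootReflection α β ∈ Φ)
    (ΦGp : Finset V)
    (hΦGp : ∃ f : V →ₗ[ℝ] ℝ, (∀ α ∈ Φ, f α ≠ 0) ∧ ∀ α, α ∈ ΦGp ↔ α ∈ Φ ∧ 0 < f α)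
    (δG : V) (hδG : δG = (2⁻¹ : ℝ) • ∑ α ∈ ΦGp, α)
    (ΦK : Finset V) (hΦKsub : ΦK ⊆ Φ)
    (hΦKrefl : ∀ α ∈ ΦK, ∀ β ∈ ΦK, rootReflection α β ∈ ΦK)
    (ΦKp : Finset V) (hΦKp : ∀ α, α ∈ ΦKp ↔ α ∈ ΦK ∧ α ∈ ΦGp)
    (δK : V) (hδK : δK = (2⁻¹ : ℝ) • ∑ α ∈ ΦKp, α)
    (w₀ : V ≃ₗᵢ[ℝ] V) (hw₀ : w₀ ∈ weylGroup Φ)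
    (hmax : ∀ w ∈ weylGroup Φ, ⟪w δG, δK⟫ ≤ ⟪w₀ δG, δK⟫) :
    (↑ΦKp : Set V) ⊆ ⇑w₀ '' (↑ΦGp : Set V) := by
  obtain ⟨f, hf, hfG⟩ := hΦGp
  have hG : IsPositiveSystem Φ ΦGp f := ⟨hf, hfG⟩
  have hK : IsPositiveSystem ΦK ΦKp f := hG.of_subset hΦKsub hΦKp
  intro β hβ
  by_contra hβw
  have hβG : β ∈ ΦGp := ((hΦKp β).1 hβ).2
  have hγ : w₀.symm β ∈ Φ := mapsTo_of_mem_weylGroup hrefl (inv_mem hw₀) (hG.mem hβG)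
  have hγG : -w₀.symm β ∈ ΦGp :=
    hG.neg_mem hrefl hγ fun hγG => hβw ⟨_, hγG, w₀.apply_symm_apply β⟩
  have hβδG : ⟪β, w₀ δG⟫ < 0 := by
    have := hG.inner_sum_pos hrefl hγG
    rw [inner_neg_right] at this
    rw [real_inner_comm, w₀.inner_map_eq_flip, hδG, real_inner_smul_left]
    linarith
  have hβδK : 0 < ⟪β, δK⟫ := by
    rw [hδK, real_inner_smul_right, real_inner_comm]
    have := hK.inner_sum_pos hΦKrefl hβ
    positivity
  have hβ0 := hG.ne_zero_of_mem hβG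
  refine (hmax _ (mul_mem (Subgroup.subset_closure ⟨β, hG.mem hβG, rfl⟩) hw₀)).not_gt ?_
  rw [LinearIsometryEquiv.coe_mul, Function.comp_apply, inner_rootReflection_left]
  have hdrop : 2 * ⟪β, w₀ δG⟫ * ⟪β, δK⟫ / ‖β‖ ^ 2 < 0 :=
    div_neg_of_neg_of_pos (by nlinarith) (by positivity)
  linarith

theorem stmt1 {V : Type*} [NormedAddCommGroup V] [InnerProductSpace ℝ V] [FiniteDimensional ℝ V]
    (Φ : Finset V) (hΦ0 : (0 : V) ∉ Φ)
    (hspan : Submodule.span ℝ (Φ : Set V) = ⊤)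
    (hred : ∀ α ∈ Φ, ∀ t : ℝ, t • α ∈ Φ → t = 1 ∨ t = -1)
    (hrefl : ∀ α ∈ Φ, ∀ β ∈ Φ, rootReflection α β ∈ Φ)
    (ΦGp : Finset V)
    (hΦGp : ∃ f : V →ₗ[ℝ] ℝ, (∀ α ∈ Φ, f α ≠ 0) ∧ ∀ α, α ∈ ΦGp ↔ α ∈ Φ ∧ 0 < f α)
    (δG : V) (hδG : δG = (2⁻¹ : ℝ) • ∑ α ∈ ΦGp, α)
    (ΦK : Finset V) (hΦKsub : ΦK ⊆ Φ)
    (hΦKneg : ∀ α ∈ ΦK, -α ∈ ΦK)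
    (hΦKrefl : ∀ α ∈ ΦK, ∀ β ∈ ΦK, rootReflection α β ∈ ΦK)
    (ΦKp : Finset V) (hΦKp : ∀ α, α ∈ ΦKp ↔ α ∈ ΦK ∧ α ∈ ΦGp)
    (δK : V) (hδK : δK = (2⁻¹ : ℝ) • ∑ α ∈ ΦKp, α)
    (w₀ : V ≃ₗᵢ[ℝ] V) (hw₀ : w₀ ∈ weylGroup Φ)
    (hmax : ∀ w ∈ weylGroup Φ, ⟪w δG, δK⟫ ≤ ⟪w₀ δG, δK⟫) :
    (↑ΦKp : Set V) ⊆ ⇑w₀ '' (↑ΦGp : Set V) :=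
  stmt1_general Φ hrefl ΦGp hΦGp δG hδG ΦK hΦKsub hΦKrefl ΦKp hΦKp δK hδK w₀ hw₀ hmax
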